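/- arXiv:0709.3896 — 3 statements merged into one kernel-verified Lean document; each statement's English description precedes it below -/
import Mathlib

section
/- The series \(\sum_{k=1}^{\infty} (2k^{2H} - (k-1)^{2H} - (k+1)^{2H})^2\) converges if and only if \(H \in (1/2, 3/4)\). -/
/-!
By the mean value theorem applied twice, the second difference
`2 (a+1)^p - a^p - (a+2)^p` equals `-p (p-1) ξ^(p-2)` for some `ξ ∈ (a, a+2)`. For `1 < p < 2`
its square is therefore squeezed between `(p (p-1))^2 (a+2)^(2p-4)` and `(p (p-1))^2 a^(2p-4)`,
so with `p = 2H` the series converges exactly when the `p`-series of exponent `4H - 4` does,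
i.e. when `4H - 4 < -1`.
-/

open Real Set

theorem exists_second_diff_eq_of_hasDerivAt {f f' f'' : ℝ → ℝ} {a : ℝ}
    (hf : ∀ x ∈ Icc a (a + 2), HasDerivAt f (f' x) x)
    (hf' : ∀ x ∈ Icc a (a + 2), HasDerivAt f' (f'' x) x) :
    ∃ ξ ∈ Ioo a (a + 2), f (a + 2) - 2 * f (a + 1) + f a = f'' ξ := by
  have hg : ∀ x ∈ Icc a (a + 1),
      HasDerivAt (fun y => f (y + 1) - f y) (f' (x + 1) - f' x) x := fun x hx =>
    ((hf (x + 1) ⟨by linarith [hx.1], by linarith [hx.2]⟩).comp_add_const x 1).sub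
      (hf x ⟨hx.1, by linarith [hx.2]⟩)
  obtain ⟨c, hc, hc_eq⟩ := exists_hasDerivAt_eq_slope (fun y => f (y + 1) - f y)
    (fun x => f' (x + 1) - f' x) (by linarith : a < a + 1)
    (fun x hx => (hg x hx).continuousAt.continuousWithinAt)
    (fun x hx => hg x (Ioo_subset_Icc_self hx))
  have hc' : ∀ x ∈ Icc c (c + 1), HasDerivAt f' (f'' x) x := fun x hx =>
    hf' x ⟨by linarith [hc.1, hx.1], by linarith [hc.2, hx.2]⟩
  obtain ⟨ξ, hξ, hξ_eq⟩ := exists_hasDerivAt_eq_slope f' f'' (by linarith : c < c + 1)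
    (fun x hx => (hc' x hx).continuousAt.continuousWithinAt)
    (fun x hx => hc' x (Ioo_subset_Icc_self hx))
  refine ⟨ξ, ⟨hc.1.trans hξ.1, by linarith [hc.2, hξ.2]⟩, ?_⟩
  simp only [add_sub_cancel_left, div_one] at hc_eq hξ_eq
  rw [hξ_eq, hc_eq, add_assoc, one_add_one_eq_two]
  ring

theorem exists_rpow_second_diff_eq (p : ℝ) {a : ℝ} (ha : 0 < a) :
    ∃ ξ ∈ Ioo a (a + 2),
      2 * (a + 1) ^ p - a ^ p - (a + 2) ^ p = -(p * (p - 1) * ξ ^ (p - 2)) := by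
  have hpos : ∀ x ∈ Icc a (a + 2), x ≠ 0 := fun x hx => (ha.trans_le hx.1).ne'
  obtain ⟨ξ, hξ, hξ_eq⟩ := exists_second_diff_eq_of_hasDerivAt (f := fun x => x ^ p)
    (f'' := fun x => p * ((p - 1) * x ^ (p - 1 - 1)))
    (fun x hx => hasDerivAt_rpow_const (Or.inl (hpos x hx)))
    (fun x hx => (hasDerivAt_rpow_const (Or.inl (hpos x hx))).const_mul p)
  refine ⟨ξ, hξ, ?_⟩
  rw [show p - 2 = p - 1 - 1 by ring]
  linear_combination -hξ_eq

theorem rpow_second_diff_sq_mem_Icc {p a : ℝ} (hp : p ≤ 2) (ha : 0 < a) :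
    (2 * (a + 1) ^ p - a ^ p - (a + 2) ^ p) ^ 2 ∈
      Icc ((p * (p - 1)) ^ 2 * (a + 2) ^ (2 * p - 4)) ((p * (p - 1)) ^ 2 * a ^ (2 * p - 4)) := by
  obtain ⟨ξ, hξ, hξ_eq⟩ := exists_rpow_second_diff_eq p ha
  have hξ_pos : 0 < ξ := ha.trans hξ.1
  have hsq : (2 * (a + 1) ^ p - a ^ p - (a + 2) ^ p) ^ 2 = (p * (p - 1)) ^ 2 * ξ ^ (2 * p - 4) := by
    rw [hξ_eq, neg_sq, mul_pow, ← rpow_mul_natCast hξ_pos.le]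
    ring_nf
  have hq : 2 * p - 4 ≤ 0 := by linarith
  rw [hsq]
  exact ⟨mul_le_mul_of_nonneg_left (rpow_le_rpow_of_nonpos hξ_pos hξ.2.le hq) (sq_nonneg _),
    mul_le_mul_of_nonneg_left (rpow_le_rpow_of_nonpos ha hξ.1.le hq) (sq_nonneg _)⟩

theorem summable_nat_add_rpow_iff (c : ℕ) {q : ℝ} :
    Summable (fun k : ℕ => ((k + c : ℕ) : ℝ) ^ q) ↔ q < -1 :=
  (summable_nat_add_iff c).trans summable_nat_rpow

/-- The series `∑_{k≥1} (2k^{2H} - (k-1)^{2H} - (k+1)^{2H})^2` converges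
iff `H ∈ (1/2, 3/4)`, for `H ∈ (1/2, 1)`. -/
theorem stmt_0 (H : ℝ) (h1 : 1/2 < H) (h2 : H < 1) :
    Summable (fun k : ℕ =>
      (2 * ((k + 1 : ℕ) : ℝ) ^ (2 * H) - ((k : ℕ) : ℝ) ^ (2 * H)
        - ((k + 2 : ℕ) : ℝ) ^ (2 * H)) ^ 2) ↔ H < 3/4 := by
  set f := fun k : ℕ => (2 * ((k + 1 : ℕ) : ℝ) ^ (2 * H) - ((k : ℕ) : ℝ) ^ (2 * H)
    - ((k + 2 : ℕ) : ℝ) ^ (2 * H)) ^ 2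
  set C := (2 * H * (2 * H - 1)) ^ 2
  have hC : 0 < C := pow_pos (by nlinarith) 2
  have hbounds : ∀ k : ℕ, f (k + 1) ∈
      Icc (C * ((k + 3 : ℕ) : ℝ) ^ (4 * H - 4)) (C * ((k + 1 : ℕ) : ℝ) ^ (4 * H - 4)) := by
    intro k
    have := rpow_second_diff_sq_mem_Icc (p := 2 * H) (a := ((k + 1 : ℕ) : ℝ)) (by linarith)
      (by positivity)
    convert this using 3 <;> push_cast <;> ring_nf
  rw [← summable_nat_add_iff 1]
  constructor
  · intro hf
    have := (summable_mul_left_iff hC.ne').1 <|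
      hf.of_nonneg_of_le (fun k => by positivity) (fun k => (hbounds k).1)
    have := (summable_nat_add_rpow_iff 3).1 this
    linarith
  · intro hH
    exact ((summable_nat_add_rpow_iff 1).2 (by linarith)).mul_left C |>.of_nonneg_of_le
      (fun k => sq_nonneg _) (fun k => (hbounds k).2)
end

section
/- When \(H \in (3/4, 1)\), the quantity \(N^2 \sum_{|i-j| \geq 2,\, 1 \le i,j \le N} \big(2|\tfrac{i-j}{N}|^{2H} - |\tfrac{i-j-1}{N}|^{2H} - |\tfrac{i-j+1}{N}|^{2H}\big)^2\) converges, as \(N \to \infty\), to \(H^2(2H-1)/(H - 3/4)\). -/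
/-!
Writing `q = 2H` and `k = |i - j|`, each summand is `Δ²(k)² / N^{2q}`, where
`Δ²(k) = (k+1)^q - 2k^q + (k-1)^q`, and the value `k` occurs `2(N - k)` times. By the mean value
theorem applied twice, `Δ²(k) = q(q-1) η^{q-2}` with `|η - k| < 1`, so `Δ²(k)² ~ c k^{2q-4}` with
`c = (q(q-1))²`. Since `2q - 4 > -1`, a Stolz–Cesàro comparison with the telescoping sums of
`(k+1)^{p+1} - k^{p+1}` gives `∑_{k<N} (N - k) k^p ~ N^{p+2} (1/(p+1) - 1/(p+2))`, and the
factor `N² / N^{2q}` exactly normalises this.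
-/

open Real Filter Finset Topology

theorem exists_rpow_sub_rpow_eq (r : ℝ) {a b : ℝ} (ha : 0 < a) (hab : a < b) :
    ∃ ξ ∈ Set.Ioo a b, b ^ r - a ^ r = r * ξ ^ (r - 1) * (b - a) := by
  obtain ⟨ξ, hξ, h⟩ := exists_hasDerivAt_eq_slope (fun x => x ^ r) (fun x => r * x ^ (r - 1)) hab
    (fun x hx => (continuousAt_rpow_const x r (.inl (by linarith [hx.1]))).continuousWithinAt)
    (fun x hx => hasDerivAt_rpow_const (.inl (by linarith [hx.1])))
  refine ⟨ξ, hξ, ?_⟩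
  rw [h, div_mul_cancel₀ _ (sub_ne_zero.2 hab.ne')]

noncomputable def secondDiff (q x : ℝ) : ℝ := (x + 1) ^ q - 2 * x ^ q + (x - 1) ^ q

theorem exists_secondDiff_eq (q : ℝ) {x : ℝ} (hx : 1 < x) :
    ∃ η ∈ Set.Ioo (x - 1) (x + 1), secondDiff q x = q * (q - 1) * η ^ (q - 2) := by
  have hderiv (t : ℝ) (ht : 0 < t) : HasDerivAt (fun s => (s + 1) ^ q - s ^ q)
      (q * (t + 1) ^ (q - 1) - q * t ^ (q - 1)) t :=
    ((((hasDerivAt_id t).add_const 1).rpow_const (.inl (by simp; positivity))).sub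
      (hasDerivAt_rpow_const (.inl ht.ne'))).congr_deriv (by simp)
  obtain ⟨ξ, hξ, hψ⟩ := exists_hasDerivAt_eq_slope _ _ (by linarith : x - 1 < x)
    (fun t ht => (hderiv t (by linarith [ht.1])).continuousAt.continuousWithinAt)
    (fun t ht => hderiv t (by linarith [ht.1]))
  obtain ⟨η, hη, hφ⟩ := exists_rpow_sub_rpow_eq (q - 1) (by linarith [hξ.1] : 0 < ξ)
    (lt_add_one ξ)
  refine ⟨η, ⟨by linarith [hξ.1, hη.1], by linarith [hξ.2, hη.2]⟩, ?_⟩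
  rw [sub_sub_cancel, div_one, sub_add_cancel] at hψ
  rw [add_sub_cancel_left, mul_one, show q - 1 - 1 = q - 2 by ring] at hφ
  rw [secondDiff]
  linear_combination q * hφ - hψ

theorem tendsto_natCast_add_div_natCast (b : ℝ) :
    Tendsto (fun k : ℕ => ((k : ℝ) + b) / k) atTop (𝓝 1) := by
  simpa [add_comm] using tendsto_add_mul_div_add_mul_atTop_nhds b 0 1 one_ne_zero

theorem tendsto_div_rpow_of_eventually_eq_mul_rpow {f : ℕ → ℝ} {C r : ℝ}
    (hf : ∀ᶠ k : ℕ in atTop, ∃ ξ ∈ Set.Icc ((k : ℝ) - 1) (k + 1), f k = C * ξ ^ r) :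
    Tendsto (fun k => f k / (k : ℝ) ^ r) atTop (𝓝 C) := by
  obtain ⟨K, hK⟩ := eventually_atTop.1 (hf.and (eventually_ge_atTop 2))
  choose! ξ hξ hfξ using fun k hk => (hK k hk).1
  have hlower := tendsto_natCast_add_div_natCast (-1)
  simp only [← sub_eq_add_neg] at hlower
  have hratio : Tendsto (fun k : ℕ => ξ k / k) atTop (𝓝 1) := by
    refine tendsto_of_tendsto_of_tendsto_of_le_of_le' hlower
      (tendsto_natCast_add_div_natCast 1) ?_ ?_ <;>
    filter_upwards [eventually_ge_atTop K] with k hk <;>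
    gcongr
    exacts [(hξ k hk).1, (hξ k hk).2]
  have h := (hratio.rpow_const (p := r) (.inl one_ne_zero)).const_mul C
  rw [one_rpow, mul_one] at h
  refine h.congr' ?_
  filter_upwards [eventually_ge_atTop K] with k hk
  have hk2 : (2 : ℝ) ≤ k := by exact_mod_cast (hK k hk).2
  rw [hfξ k hk, div_rpow (by linarith [(hξ k hk).1]) (by positivity), mul_div_assoc]

theorem tendsto_rpow_add_one_sub_rpow_div_rpow (p : ℝ) :
    Tendsto (fun k : ℕ => (((k : ℝ) + 1) ^ (p + 1) - (k : ℝ) ^ (p + 1)) / (k : ℝ) ^ p)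
      atTop (𝓝 (p + 1)) := by
  refine tendsto_div_rpow_of_eventually_eq_mul_rpow ?_
  filter_upwards [eventually_ge_atTop 1] with k hk
  obtain ⟨ξ, hξ, h⟩ := exists_rpow_sub_rpow_eq (p + 1) (by positivity : (0 : ℝ) < k)
    (lt_add_one (k : ℝ))
  refine ⟨ξ, ⟨by linarith [hξ.1], hξ.2.le⟩, ?_⟩
  rw [h, add_sub_cancel_right, add_sub_cancel_left, mul_one]

theorem tendsto_secondDiff_div_rpow (q : ℝ) :
    Tendsto (fun k : ℕ => secondDiff q k / (k : ℝ) ^ (q - 2)) atTop (𝓝 (q * (q - 1))) := by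
  refine tendsto_div_rpow_of_eventually_eq_mul_rpow ?_
  filter_upwards [eventually_ge_atTop 2] with k hk
  obtain ⟨η, hη, h⟩ := exists_secondDiff_eq q (by exact_mod_cast hk : (1 : ℝ) < k)
  exact ⟨η, Set.Ioo_subset_Icc_self hη, h⟩

theorem tendsto_ite_secondDiff_sq_div_rpow (q : ℝ) :
    Tendsto (fun k : ℕ => (if 2 ≤ k then secondDiff q k ^ 2 else 0) / (k : ℝ) ^ (2 * q - 4))
      atTop (𝓝 ((q * (q - 1)) ^ 2)) := by
  refine ((tendsto_secondDiff_div_rpow q).pow 2).congr' ?_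
  filter_upwards [eventually_ge_atTop 2] with k hk
  rw [if_pos hk, div_pow, ← rpow_mul_natCast (Nat.cast_nonneg k)]
  congr 2
  push_cast
  ring

/-- Stolz–Cesàro against the telescoping sequence `(k + 1) ^ (p + 1) - k ^ (p + 1)`. -/
theorem tendsto_sum_range_div_rpow {p c : ℝ} (hp : -1 < p) {a : ℕ → ℝ}
    (ha : Tendsto (fun k => a k / (k : ℝ) ^ p) atTop (𝓝 c)) :
    Tendsto (fun n : ℕ => (∑ k ∈ range n, a k) / (n : ℝ) ^ (p + 1)) atTop
      (𝓝 (c / (p + 1))) := by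
  have hp1 : 0 < p + 1 := by linarith
  set v : ℕ → ℝ := fun k => ((k : ℝ) + 1) ^ (p + 1) - (k : ℝ) ^ (p + 1)
  have hv_pos (k : ℕ) : 0 < v k :=
    sub_pos.2 (rpow_lt_rpow (by positivity) (lt_add_one _) hp1)
  have hv_sum (n : ℕ) : ∑ k ∈ range n, v k = (n : ℝ) ^ (p + 1) := by
    have h := sum_range_sub (fun k : ℕ => (k : ℝ) ^ (p + 1)) n
    simp only [Nat.cast_add, Nat.cast_one, Nat.cast_zero, zero_rpow hp1.ne', sub_zero] at h
    exact h
  have hav : Tendsto (fun k => a k / v k) atTop (𝓝 (c / (p + 1))) := by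
    refine (ha.div (tendsto_rpow_add_one_sub_rpow_div_rpow p) hp1.ne').congr' ?_
    filter_upwards [eventually_ge_atTop 1] with k hk
    exact div_div_div_cancel_right₀ (by positivity) _ _
  have hsmall : (fun k => a k - c / (p + 1) * v k) =o[atTop] v := by
    rw [Asymptotics.isLittleO_iff_tendsto' (.of_forall fun k hk => absurd hk (hv_pos k).ne')]
    simpa [sub_div, (hv_pos _).ne'] using hav.sub_const (c / (p + 1))
  have hsum := (hsmall.sum_range (fun k => (hv_pos k).le) (by
    simpa only [hv_sum, Function.comp_def] using
      (tendsto_rpow_atTop hp1).comp tendsto_natCast_atTop_atTop)).tendsto_div_nhds_zero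
  have h := hsum.add_const (c / (p + 1))
  rw [zero_add] at h
  refine h.congr' ?_
  filter_upwards [eventually_ge_atTop 1] with n hn
  have : (0 : ℝ) < (n : ℝ) ^ (p + 1) := by positivity
  rw [sum_sub_distrib, ← mul_sum, hv_sum]
  field_simp
  ring

theorem tendsto_sum_range_mul_sub_div_rpow {p c : ℝ} (hp : -1 < p) {a : ℕ → ℝ}
    (ha : Tendsto (fun k => a k / (k : ℝ) ^ p) atTop (𝓝 c)) :
    Tendsto (fun n : ℕ => (∑ k ∈ range n, ((n : ℝ) - k) * a k) / (n : ℝ) ^ (p + 2)) atTop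
      (𝓝 (c / (p + 1) - c / (p + 2))) := by
  have hmul : Tendsto (fun k : ℕ => k * a k / (k : ℝ) ^ (p + 1)) atTop (𝓝 c) := by
    refine ha.congr' ?_
    filter_upwards [eventually_ne_atTop 0] with k hk
    rw [rpow_add_one (by positivity), mul_comm ((k : ℝ) ^ p), mul_div_mul_left _ _ (by positivity)]
  have h := (tendsto_sum_range_div_rpow hp ha).sub
    (tendsto_sum_range_div_rpow (by linarith : -1 < p + 1) hmul)
  rw [show p + 1 + 1 = p + 2 by ring] at h
  refine h.congr' ?_
  filter_upwards [eventually_ne_atTop 0] with n hn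
  have : (0 : ℝ) < (n : ℝ) ^ (p + 1) := by positivity
  rw [show p + 2 = p + 1 + 1 by ring, rpow_add_one (by positivity) (p + 1)]
  simp only [sub_mul, sum_sub_distrib, ← mul_sum]
  field_simp

theorem sum_range_sum_range_natAbs_sub {M : Type*} [AddCommMonoid M] {F : ℕ → M} (hF : F 0 = 0)
    (n : ℕ) :
    ∑ i ∈ range n, ∑ j ∈ range n, F ((i : ℤ) - j).natAbs = ∑ k ∈ range n, (2 * (n - k)) • F k := by
  induction n with
  | zero => simp
  | succ n ih =>
    have hrow : ∑ j ∈ range n, F ((n : ℤ) - j).natAbs = ∑ k ∈ range n, F (k + 1) := by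
      rw [← sum_range_reflect]
      refine sum_congr rfl fun j hj => congrArg F ?_
      have := mem_range.1 hj
      omega
    have hcol : ∑ i ∈ range n, F ((i : ℤ) - n).natAbs = ∑ k ∈ range n, F (k + 1) := by
      rw [← hrow]
      exact sum_congr rfl fun i _ => congrArg F (by omega)
    have hweights : ∀ k ∈ range (n + 1),
        (2 * (n + 1 - k)) • F k = (2 * (n - k)) • F k + 2 • F k := fun k hk => by
      rw [← add_smul]
      have := mem_range.1 hk
      congr 1
      omega
    rw [sum_congr rfl hweights, sum_add_distrib, ← smul_sum, sum_range_succ' F, hF, add_zero,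
      sum_range_succ _ n]
    simp only [sum_range_succ, sum_add_distrib, ih, hrow, hcol, sub_self, Int.natAbs_zero, hF,
      Nat.sub_self, mul_zero, zero_smul, two_smul]
    abel

theorem sq_two_mul_abs_div_rpow_sub (q : ℝ) {N x : ℝ} (hN : 0 < N) (hx : 1 ≤ |x|) :
    (2 * |x / N| ^ q - |(x - 1) / N| ^ q - |(x + 1) / N| ^ q) ^ 2
      = secondDiff q |x| ^ 2 / (N ^ q) ^ 2 := by
  have habs : |x - 1| ^ q + |x + 1| ^ q = (|x| - 1) ^ q + (|x| + 1) ^ q := by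
    rcases abs_cases x with ⟨hx', hpos⟩ | ⟨hx', hneg⟩
    · rw [hx'] at hx ⊢
      rw [abs_of_nonneg (by linarith), abs_of_nonneg (by linarith)]
    · rw [hx'] at hx ⊢
      rw [abs_of_nonpos (by linarith), abs_of_nonpos (by linarith), add_comm]
      ring_nf
  simp only [abs_div, abs_of_pos hN, div_rpow (abs_nonneg _) hN.le]
  rw [secondDiff, ← div_pow, ← neg_sq (_ / _)]
  congr 1
  field_simp
  linear_combination -habs

theorem sum_Icc_sum_Icc_ite_sq_eq (q : ℝ) {N : ℕ} (hN : 0 < N) :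
    ∑ i ∈ Icc 1 N, ∑ j ∈ Icc 1 N,
      (if 2 ≤ |(i : ℤ) - (j : ℤ)| then
        (2 * |((i : ℝ) - (j : ℝ)) / N| ^ q - |((i : ℝ) - (j : ℝ) - 1) / N| ^ q
          - |((i : ℝ) - (j : ℝ) + 1) / N| ^ q) ^ 2
      else 0)
    = 2 * (∑ k ∈ range N, ((N : ℝ) - k) * (if 2 ≤ k then secondDiff q k ^ 2 else 0))
      / ((N : ℝ) ^ q) ^ 2 := by
  set G : ℕ → ℝ := fun k => (if 2 ≤ k then secondDiff q k ^ 2 else 0) / ((N : ℝ) ^ q) ^ 2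
  have hterm (i j : ℕ) : (if 2 ≤ |(i : ℤ) - (j : ℤ)| then
        (2 * |((i : ℝ) - (j : ℝ)) / N| ^ q - |((i : ℝ) - (j : ℝ) - 1) / N| ^ q
          - |((i : ℝ) - (j : ℝ) + 1) / N| ^ q) ^ 2
      else 0) = G ((i : ℤ) - j).natAbs := by
    have habs : |(i : ℝ) - j| = (((i : ℤ) - j).natAbs : ℝ) := by
      rw [Nat.cast_natAbs, Int.cast_abs]
      push_cast
      rfl
    simp only [G, Int.abs_eq_natAbs, Nat.ofNat_le_cast]
    split_ifs with h
    · rw [sq_two_mul_abs_div_rpow_sub q (by positivity)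
        (by rw [habs]; exact_mod_cast one_le_two.trans h), habs]
    · rw [zero_div]
  have hshift (f : ℕ → ℝ) : ∑ i ∈ Icc 1 N, f i = ∑ i ∈ range N, f (i + 1) := by
    rw [range_eq_Ico, sum_Ico_add' f 0 N 1, zero_add, Ico_add_one_right_eq_Icc]
  simp only [hterm, hshift, Nat.cast_add, Nat.cast_one, add_sub_add_right_eq_sub]
  rw [sum_range_sum_range_natAbs_sub (by simp [G]), mul_sum, sum_div]
  refine sum_congr rfl fun k hk => ?_
  rw [nsmul_eq_mul, Nat.cast_mul, Nat.cast_sub (mem_range.1 hk).le]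
  simp only [G]
  push_cast
  ring

theorem stmt_3_general (H : ℝ) (h1 : 3/4 < H) :
    Tendsto (fun N : ℕ =>
      (N : ℝ) ^ 2 * ∑ i ∈ Finset.Icc 1 N, ∑ j ∈ Finset.Icc 1 N,
        if 2 ≤ |(i : ℤ) - (j : ℤ)| then
          (2 * |((i : ℝ) - (j : ℝ)) / N| ^ (2 * H)
            - |((i : ℝ) - (j : ℝ) - 1) / N| ^ (2 * H)
            - |((i : ℝ) - (j : ℝ) + 1) / N| ^ (2 * H)) ^ 2
        else 0)
      atTop (nhds (H ^ 2 * (2 * H - 1) / (H - 3/4))) := by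
  have hlim := (tendsto_sum_range_mul_sub_div_rpow (by linarith)
    (tendsto_ite_secondDiff_sq_div_rpow (2 * H))).const_mul 2
  have hvalue : 2 * ((2 * H * (2 * H - 1)) ^ 2 / (2 * (2 * H) - 4 + 1)
      - (2 * H * (2 * H - 1)) ^ 2 / (2 * (2 * H) - 4 + 2)) = H ^ 2 * (2 * H - 1) / (H - 3 / 4) := by
    have h43 : 4 * H - 3 ≠ 0 := by linarith
    have h21 : 2 * (2 * H - 1) ≠ 0 := by linarith
    have h34 : H - 3 / 4 ≠ 0 := by linarith
    rw [show 2 * (2 * H) - 4 + 1 = 4 * H - 3 by ring,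
      show 2 * (2 * H) - 4 + 2 = 2 * (2 * H - 1) by ring, div_sub_div _ _ h43 h21,
      mul_div_assoc', div_eq_div_iff (mul_ne_zero h43 h21) h34]
    ring
  rw [hvalue] at hlim
  refine hlim.congr' ?_
  filter_upwards [eventually_gt_atTop 0] with N hN
  have hpow : ((N : ℝ) ^ (2 * H)) ^ 2 = (N : ℝ) ^ (2 * (2 * H) - 4 + 2) * (N : ℝ) ^ 2 := by
    rw [← rpow_mul_natCast (by positivity), ← rpow_add_natCast (by positivity)]
    congr 1
    push_cast
    ring
  rw [sum_Icc_sum_Icc_ite_sq_eq _ hN, hpow]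
  field_simp

/-- For `H ∈ (3/4,1)`,
`N² ∑_{1≤i,j≤N, |i-j|≥2} (2|((i-j)/N)|^{2H} - |((i-j-1)/N)|^{2H} - |((i-j+1)/N)|^{2H})²`
converges to `H²(2H-1)/(H-3/4)` as `N → ∞`. -/
theorem stmt_3 (H : ℝ) (h1 : 3/4 < H) (h2 : H < 1) :
    Tendsto (fun N : ℕ =>
      (N : ℝ) ^ 2 * ∑ i ∈ Finset.Icc 1 N, ∑ j ∈ Finset.Icc 1 N,
        if 2 ≤ |(i : ℤ) - (j : ℤ)| then
          (2 * |((i : ℝ) - (j : ℝ)) / N| ^ (2 * H)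
            - |((i : ℝ) - (j : ℝ) - 1) / N| ^ (2 * H)
            - |((i : ℝ) - (j : ℝ) + 1) / N| ^ (2 * H)) ^ 2
        else 0)
      atTop (nhds (H ^ 2 * (2 * H - 1) / (H - 3/4))) :=
  stmt_3_general H h1
end

section
/- Define \(g(x) = \int_0^{1-x}\int_0^1\int_0^1 |(z-w)(x+y-z)(y-w)|^{H-1}\, dy\, dz\, dw\) for \(x \in [0,1]\) and \(H \in (1/2,1)\). Then \(g\) is bounded on \([0,1]\). -/
/-!
Splitting `|(z-w)(y-w)|^q ≤ |z-w|^{2q} + |y-w|^{2q}` separates the three singular factors of the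
integrand. With `q = H - 1`, each of `|w - c|^{2q}` and `|z - c|^q` is integrable over `[0,1]`
with a bound uniform in the centre `c ∈ [0,1]`, because `2q > -1` exactly when `H > 1/2`.
Integrating out `w` and then `z` therefore bounds the double integral uniformly in `x` and `y`,
and the outer integral runs over an interval of length at most `1`.
-/

open Real MeasureTheory Set intervalIntegral Interval

theorem rpow_abs_mul_mul_le (q a b c : ℝ) :
    |a * b * c| ^ q ≤ (|a| ^ (2 * q) + |c| ^ (2 * q)) * |b| ^ q := by
  have hsq : ∀ t : ℝ, |t| ^ (2 * q) = (|t| ^ q) ^ 2 := fun t => by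
    rw [mul_comm, rpow_mul (abs_nonneg t), rpow_two]
  rw [abs_mul, abs_mul, mul_rpow (by positivity) (abs_nonneg _),
    mul_rpow (abs_nonneg _) (abs_nonneg _), hsq, hsq]
  have hb := rpow_nonneg (abs_nonneg b) q
  have hac : |a| ^ q * |c| ^ q ≤ (|a| ^ q) ^ 2 + (|c| ^ q) ^ 2 := by
    nlinarith [sq_nonneg (|a| ^ q - |c| ^ q)]
  nlinarith [mul_le_mul_of_nonneg_right hac hb]

theorem intervalIntegral.integral_mono_on_of_nonneg {μ : Measure ℝ} {f g : ℝ → ℝ}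
    {a b : ℝ} (hab : a ≤ b) (hf : ∀ x ∈ Icc a b, 0 ≤ f x)
    (hfg : ∀ x ∈ Icc a b, f x ≤ g x) (hg : IntervalIntegrable g μ a b) :
    ∫ x in a..b, f x ∂μ ≤ ∫ x in a..b, g x ∂μ := by
  rw [integral_of_le hab, integral_of_le hab]
  exact setIntegral_mono_of_nonneg (fun x hx => hf x (Ioc_subset_Icc_self hx))
    (fun x hx => hfg x (Ioc_subset_Icc_self hx)) hg.1

section AbsRpow

variable {r : ℝ}

theorem intervalIntegrable_abs_rpow (hr : -1 < r) (a b : ℝ) :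
    IntervalIntegrable (fun u => |u| ^ r) volume a b := by
  have hloc : LocallyIntegrable (fun u : ℝ => |u| ^ r) volume :=
    locallyIntegrable_of_norm_le_rpow (C := 1) (α := -r) (by simp) (by simp; linarith)
      (ae_of_all _ fun u => by simp [abs_of_nonneg (rpow_nonneg (abs_nonneg u) r)])
      (by fun_prop : Measurable fun u : ℝ => |u| ^ r).aestronglyMeasurable
  exact (hloc.integrableOn_isCompact isCompact_uIcc).intervalIntegrable

theorem intervalIntegrable_abs_sub_rpow (hr : -1 < r) (a b c : ℝ) :
    IntervalIntegrable (fun w => |w - c| ^ r) volume a b := by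
  simpa using (intervalIntegrable_abs_rpow hr (a - c) (b - c)).comp_sub_right c

theorem integral_abs_rpow_of_nonneg (hr : -1 < r) {t : ℝ} (ht : 0 ≤ t) :
    ∫ u in (0:ℝ)..t, |u| ^ r = t ^ (r + 1) / (r + 1) := by
  have hpos : ∀ u ∈ uIcc 0 t, |u| ^ r = u ^ r := fun u hu => by
    rw [uIcc_of_le ht] at hu
    rw [abs_of_nonneg hu.1]
  rw [integral_congr hpos, integral_rpow (Or.inl hr), zero_rpow (by linarith), sub_zero]

theorem integral_abs_sub_rpow (hr : -1 < r) {a b c : ℝ} (hac : a ≤ c) (hcb : c ≤ b) :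
    ∫ w in a..b, |w - c| ^ r = ((c - a) ^ (r + 1) + (b - c) ^ (r + 1)) / (r + 1) := by
  have hleft : ∫ u in (a - c)..0, |u| ^ r = ∫ u in (0:ℝ)..(c - a), |u| ^ r := by
    simpa using integral_comp_neg (a := a - c) (b := 0) fun u => |u| ^ r
  rw [integral_comp_sub_right (fun u => |u| ^ r),
    ← integral_add_adjacent_intervals (b := 0) (intervalIntegrable_abs_rpow hr _ _)
      (intervalIntegrable_abs_rpow hr _ _),
    hleft, integral_abs_rpow_of_nonneg hr (by linarith),
    integral_abs_rpow_of_nonneg hr (by linarith), add_div]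

theorem integral_abs_sub_rpow_le (hr : -1 < r) {c : ℝ} (hc : c ∈ Icc (0:ℝ) 1) :
    ∫ w in (0:ℝ)..1, |w - c| ^ r ≤ 2 / (r + 1) := by
  rw [integral_abs_sub_rpow hr hc.1 hc.2, sub_zero]
  have h₁ : c ^ (r + 1) ≤ 1 := rpow_le_one hc.1 hc.2 (by linarith)
  have h₂ : (1 - c) ^ (r + 1) ≤ 1 :=
    rpow_le_one (by linarith [hc.2]) (by linarith [hc.1]) (by linarith)
  exact div_le_div_of_nonneg_right (by linarith) (by linarith)

end AbsRpow

section TripleProduct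

variable {q : ℝ}

theorem integral_rpow_abs_mul_mul_le (hq : -1/2 < q) (b : ℝ) {y z : ℝ}
    (hy : y ∈ Icc (0:ℝ) 1) (hz : z ∈ Icc (0:ℝ) 1) :
    ∫ w in (0:ℝ)..1, |(z - w) * b * (y - w)| ^ q ≤ 4 / (2 * q + 1) * |b| ^ q := by
  have h2q : -1 < 2 * q := by linarith
  have hz' := intervalIntegrable_abs_sub_rpow h2q 0 1 z
  have hy' := intervalIntegrable_abs_sub_rpow h2q 0 1 y
  calc ∫ w in (0:ℝ)..1, |(z - w) * b * (y - w)| ^ q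
      ≤ ∫ w in (0:ℝ)..1, (|w - z| ^ (2 * q) + |w - y| ^ (2 * q)) * |b| ^ q := by
        refine integral_mono_on_of_nonneg zero_le_one (fun _ _ => by positivity) (fun w _ => ?_)
          ((hz'.add hy').mul_const _)
        rw [abs_sub_comm w z, abs_sub_comm w y]
        exact rpow_abs_mul_mul_le q (z - w) b (y - w)
    _ = ((∫ w in (0:ℝ)..1, |w - z| ^ (2 * q)) + ∫ w in (0:ℝ)..1, |w - y| ^ (2 * q))
          * |b| ^ q := by
        rw [intervalIntegral.integral_mul_const, integral_add hz' hy']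
    _ ≤ (2 / (2 * q + 1) + 2 / (2 * q + 1)) * |b| ^ q := by
        gcongr
        · exact integral_abs_sub_rpow_le h2q hz
        · exact integral_abs_sub_rpow_le h2q hy
    _ = 4 / (2 * q + 1) * |b| ^ q := by ring

theorem integral_integral_rpow_abs_mul_mul_le (hq : -1/2 < q) {s y : ℝ}
    (hs : s ∈ Icc (0:ℝ) 1) (hy : y ∈ Icc (0:ℝ) 1) :
    ∫ z in (0:ℝ)..1, ∫ w in (0:ℝ)..1, |(z - w) * (s - z) * (y - w)| ^ q
      ≤ 4 / (2 * q + 1) * (2 / (q + 1)) := by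
  have hconst : 0 ≤ 4 / (2 * q + 1) := div_nonneg zero_le_four (by linarith)
  calc ∫ z in (0:ℝ)..1, ∫ w in (0:ℝ)..1, |(z - w) * (s - z) * (y - w)| ^ q
      ≤ ∫ z in (0:ℝ)..1, 4 / (2 * q + 1) * |z - s| ^ q := by
        refine integral_mono_on_of_nonneg zero_le_one
          (fun z _ => integral_nonneg zero_le_one fun w _ => by positivity) (fun z hz => ?_)
          ((intervalIntegrable_abs_sub_rpow (by linarith) 0 1 s).const_mul _)
        rw [abs_sub_comm z s]
        exact integral_rpow_abs_mul_mul_le hq (s - z) hy hz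
    _ ≤ 4 / (2 * q + 1) * (2 / (q + 1)) := by
        rw [intervalIntegral.integral_const_mul]
        exact mul_le_mul_of_nonneg_left (integral_abs_sub_rpow_le (by linarith) hs) hconst

end TripleProduct

theorem stmt_10_general (H : ℝ) (h1 : 1/2 < H) (g : ℝ → ℝ)
    (hg : ∀ x, g x =
      ∫ y in (0:ℝ)..(1 - x), ∫ z in (0:ℝ)..1, ∫ w in (0:ℝ)..1,
        |(z - w) * (x + y - z) * (y - w)| ^ (H - 1)) :
    ∃ C : ℝ, ∀ x ∈ Set.Icc (0:ℝ) 1, |g x| ≤ C := by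
  set C := 4 / (2 * (H - 1) + 1) * (2 / (H - 1 + 1))
  have hC : 0 ≤ C :=
    mul_nonneg (div_nonneg zero_le_four (by linarith)) (div_nonneg zero_le_two (by linarith))
  refine ⟨C, fun x hx => ?_⟩
  have hbound : ∀ y ∈ Ι 0 (1 - x), ‖∫ z in (0:ℝ)..1, ∫ w in (0:ℝ)..1,
      |(z - w) * (x + y - z) * (y - w)| ^ (H - 1)‖ ≤ C := by
    intro y hy
    rw [uIoc_of_le (by linarith [hx.2])] at hy
    rw [norm_of_nonneg (integral_nonneg zero_le_one fun z _ =>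
      integral_nonneg zero_le_one fun w _ => by positivity)]
    exact integral_integral_rpow_abs_mul_mul_le (by linarith)
      ⟨by linarith [hx.1, hy.1], by linarith [hy.2]⟩ ⟨hy.1.le, by linarith [hy.2, hx.1]⟩
  have hlength : |1 - x - 0| ≤ 1 := by
    rw [sub_zero, abs_of_nonneg (by linarith [hx.2])]
    linarith [hx.1]
  calc |g x| ≤ C * |1 - x - 0| := by rw [hg x]; exact norm_integral_le_of_norm_le_const hbound
    _ ≤ C := mul_le_of_le_one_right hC hlength

/-- For `H ∈ (1/2,1)`, the function
`g(x) = ∫₀^{1-x}∫₀¹∫₀¹ |(z-w)(x+y-z)(y-w)|^{H-1} dz dw dy`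
is bounded on `[0,1]`. -/
theorem stmt_10 (H : ℝ) (h1 : 1/2 < H) (h2 : H < 1) (g : ℝ → ℝ)
    (hg : ∀ x, g x =
      ∫ y in (0:ℝ)..(1 - x), ∫ z in (0:ℝ)..1, ∫ w in (0:ℝ)..1,
        |(z - w) * (x + y - z) * (y - w)| ^ (H - 1)) :
    ∃ C : ℝ, ∀ x ∈ Set.Icc (0:ℝ) 1, |g x| ≤ C :=
  stmt_10_general H h1 g hg
end
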